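/- arXiv:1905.01414 — 3 statements merged into one kernel-verified Lean document; each statement's English description precedes it below -/
import Mathlib

section
/- For every σ ∈ S_k and every i with 2 ≤ i ≤ k, the action of σ on β_i is given by: σ·β_i = β_{σ(i)} if σ(1) = 1; σ·β_i = −β_{σ(1)} if σ(i) = 1; and σ·β_i = β_{σ(i)} − β_{σ(1)} if σ(j) = 1 for some j ∉ {1, i}. -/
open MvPolynomial

noncomputable section

/-- The polynomial ring `R = ℂ[x_{ij} : i ∈ {1,2}, 1 ≤ j ≤ k]`. -/
abbrev R (k : ℕ) : Type := MvPolynomial (Fin 2 × Fin k) ℂ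

/-- The action of `σ ∈ S_k` permuting the second index: `x_{ij} ↦ x_{iσ(j)}`. -/
def permAct (k : ℕ) (σ : Equiv.Perm (Fin k)) : R k →ₐ[ℂ] R k :=
  aeval fun p : Fin 2 × Fin k => X (p.1, σ p.2)

/-- The column index `1` of the paper (0-indexed: `0`). -/
def z (k : ℕ) (hk : 3 ≤ k) : Fin k := ⟨0, by omega⟩

/-- `β_i = (∏_{2 ≤ l ≤ k, l ≠ i} x_{1l}) · (x₁₁ x_{2i} − x₂₁ x_{1i})`, for a column index
`i ≠ 1` (0-indexed: `j ≠ 0`). -/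
def beta (k : ℕ) (hk : 3 ≤ k) (j : Fin k) : R k :=
  (∏ l ∈ Finset.univ.filter fun l : Fin k => l ≠ z k hk ∧ l ≠ j, X ((0 : Fin 2), l)) *
    (X ((0 : Fin 2), z k hk) * X ((1 : Fin 2), j) -
      X ((1 : Fin 2), z k hk) * X ((0 : Fin 2), j))

/-- `T₁ = β₂ + β₃ + ⋯ + β_k`. -/
def T1 (k : ℕ) (hk : 3 ≤ k) : R k :=
  ∑ j ∈ Finset.univ.filter fun j : Fin k => j ≠ z k hk, beta k hk j

/-- `T_i`, where `T_i = T₁ − k β_i` for `i ≠ 1`. -/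
def Tv (k : ℕ) (hk : 3 ≤ k) (i : Fin k) : R k :=
  if i = z k hk then T1 k hk else T1 k hk - (k : R k) * beta k hk i

lemma prod_perm (k : ℕ) (σ : Equiv.Perm (Fin k)) (a b : Fin k) :
    (∏ l ∈ Finset.univ.filter fun l : Fin k => l ≠ a ∧ l ≠ b, (X ((0:Fin 2), σ l) : R k)) =
    ∏ m ∈ Finset.univ.filter fun m : Fin k => m ≠ σ a ∧ m ≠ σ b, X ((0:Fin 2), m) := by
  rw [Finset.prod_filter, Finset.prod_filter, ← Equiv.prod_comp σ
    (fun m => if m ≠ σ a ∧ m ≠ σ b then (X ((0:Fin 2), m) : R k) else 1)]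
  refine Finset.prod_congr rfl fun l _ => ?_
  simp [EmbeddingLike.apply_eq_iff_eq]

lemma prod_split (k : ℕ) (a b c : Fin k) (hab : a ≠ b) (hac : a ≠ c) :
    (∏ m ∈ Finset.univ.filter fun m : Fin k => m ≠ b ∧ m ≠ c, (X ((0:Fin 2), m) : R k)) =
    X ((0:Fin 2), a) *
      ∏ m ∈ Finset.univ.filter fun m : Fin k => m ≠ a ∧ m ≠ b ∧ m ≠ c, X ((0:Fin 2), m) := by
  have h : (Finset.univ.filter fun m : Fin k => m ≠ b ∧ m ≠ c) =
      insert a (Finset.univ.filter fun m : Fin k => m ≠ a ∧ m ≠ b ∧ m ≠ c) := by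
    ext m
    simp only [Finset.mem_filter, Finset.mem_univ, true_and, Finset.mem_insert]
    constructor
    · rintro ⟨h1, h2⟩
      by_cases hm : m = a
      · exact Or.inl hm
      · exact Or.inr ⟨hm, h1, h2⟩
    · rintro (rfl | ⟨_, h1, h2⟩)
      · exact ⟨hab, hac⟩
      · exact ⟨h1, h2⟩
  rw [h, Finset.prod_insert (by simp)]

/-- The action of `σ ∈ S_k` on `β_i` (`i ≠ 1`): it equals `β_{σ(i)}` if `σ(1) = 1`,
`−β_{σ(1)}` if `σ(i) = 1`, and `β_{σ(i)} − β_{σ(1)}` if `σ(j) = 1` for some `j ∉ {1, i}`. -/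
theorem stmt_8 (k : ℕ) (hk : 3 ≤ k) (σ : Equiv.Perm (Fin k)) (i : Fin k) (hi : i ≠ z k hk) :
    (σ (z k hk) = z k hk → permAct k σ (beta k hk i) = beta k hk (σ i)) ∧
    (σ i = z k hk → permAct k σ (beta k hk i) = -beta k hk (σ (z k hk))) ∧
    (σ (z k hk) ≠ z k hk → σ i ≠ z k hk →
      permAct k σ (beta k hk i) = beta k hk (σ i) - beta k hk (σ (z k hk))) := by
  set z' := z k hk with hz
  have key : permAct k σ (beta k hk i) =
      (∏ m ∈ Finset.univ.filter fun m : Fin k => m ≠ σ z' ∧ m ≠ σ i, X ((0:Fin 2), m)) *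
      (X ((0:Fin 2), σ z') * X ((1:Fin 2), σ i) -
        X ((1:Fin 2), σ z') * X ((0:Fin 2), σ i)) := by
    simp only [beta, map_mul, map_sub, map_prod, permAct, aeval_X]
    rw [prod_perm]
  have hab : σ z' ≠ σ i := fun h => hi (σ.injective h).symm
  refine ⟨?_, ?_, ?_⟩
  · intro h
    rw [key, h, beta]
  · intro h
    rw [key, h, beta]
    have hset : (Finset.univ.filter fun m : Fin k => m ≠ σ z' ∧ m ≠ z') =
        Finset.univ.filter fun m : Fin k => m ≠ z' ∧ m ≠ σ z' := by
      ext m; simp [and_comm]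
    rw [hset]; ring
  · intro h1 h2
    rw [key, beta, beta]
    have e1 : (Finset.univ.filter fun m : Fin k => m ≠ σ z' ∧ m ≠ σ i) =
        insert z' (Finset.univ.filter fun m : Fin k => m ≠ z' ∧ m ≠ σ z' ∧ m ≠ σ i) := by
      ext m
      simp only [Finset.mem_filter, Finset.mem_univ, true_and, Finset.mem_insert]
      constructor
      · rintro ⟨g1, g2⟩
        by_cases hm : m = z'
        · exact Or.inl hm
        · exact Or.inr ⟨hm, g1, g2⟩
      · rintro (rfl | ⟨_, g1, g2⟩)
        · exact ⟨fun hc => h1 hc.symm, fun hc => h2 hc.symm⟩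
        · exact ⟨g1, g2⟩
    have e2 : (Finset.univ.filter fun m : Fin k => m ≠ z' ∧ m ≠ σ i) =
        insert (σ z') (Finset.univ.filter fun m : Fin k => m ≠ z' ∧ m ≠ σ z' ∧ m ≠ σ i) := by
      ext m
      simp only [Finset.mem_filter, Finset.mem_univ, true_and, Finset.mem_insert]
      constructor
      · rintro ⟨g1, g2⟩
        by_cases hm : m = σ z'
        · exact Or.inl hm
        · exact Or.inr ⟨g1, hm, g2⟩
      · rintro (rfl | ⟨g0, _, g2⟩)
        · exact ⟨h1, hab⟩
        · exact ⟨g0, g2⟩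
    have e3 : (Finset.univ.filter fun m : Fin k => m ≠ z' ∧ m ≠ σ z') =
        insert (σ i) (Finset.univ.filter fun m : Fin k => m ≠ z' ∧ m ≠ σ z' ∧ m ≠ σ i) := by
      ext m
      simp only [Finset.mem_filter, Finset.mem_univ, true_and, Finset.mem_insert]
      constructor
      · rintro ⟨g1, g2⟩
        by_cases hm : m = σ i
        · exact Or.inl hm
        · exact Or.inr ⟨g1, g2, hm⟩
      · rintro (rfl | ⟨g0, g1, _⟩)
        · exact ⟨h2, fun hc => hab hc.symm⟩
        · exact ⟨g0, g1⟩
    rw [e1, e2, e3, Finset.prod_insert (by simp), Finset.prod_insert (by simp),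
      Finset.prod_insert (by simp)]
    ring
end
end

section
/- Set T₁ = β₂ + β₃ + ⋯ + β_k and T_i = T₁ − k·β_i for i = 2, 3, …, k. Then for every σ ∈ S_k and every i with 1 ≤ i ≤ k, one has σ·T_i = T_{σ(i)}. -/
open MvPolynomial

noncomputable section

/-- A general version of `beta` with arbitrary base column `a`. -/
def gbeta (k : ℕ) (a b : Fin k) : R k :=
  (∏ l ∈ Finset.univ.filter fun l : Fin k => l ≠ a ∧ l ≠ b, X ((0 : Fin 2), l)) *
    (X ((0 : Fin 2), a) * X ((1 : Fin 2), b) -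
      X ((1 : Fin 2), a) * X ((0 : Fin 2), b))

lemma beta_eq_gbeta (k : ℕ) (hk : 3 ≤ k) (j : Fin k) :
    beta k hk j = gbeta k (z k hk) j := rfl

lemma gbeta_self (k : ℕ) (a : Fin k) : gbeta k a a = 0 := by
  have h : X ((0 : Fin 2), a) * X ((1 : Fin 2), a) -
      X ((1 : Fin 2), a) * X ((0 : Fin 2), a) = (0 : R k) := by ring
  rw [gbeta, h, mul_zero]

lemma gbeta_antisymm (k : ℕ) (a b : Fin k) : gbeta k a b + gbeta k b a = 0 := by
  have hf : (Finset.univ.filter fun l : Fin k => l ≠ b ∧ l ≠ a) =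
      (Finset.univ.filter fun l : Fin k => l ≠ a ∧ l ≠ b) := by
    ext l; simp [and_comm]
  rw [gbeta, gbeta, hf]; ring

lemma gbeta_cocycle (k : ℕ) (a b c : Fin k) :
    gbeta k a b + gbeta k b c = gbeta k a c := by
  by_cases hab : a = b
  · rw [hab, gbeta_self, zero_add]
  by_cases hbc : b = c
  · rw [hbc, gbeta_self, add_zero]
  by_cases hac : a = c
  · rw [hac, gbeta_self, gbeta_antisymm]
  set S := Finset.univ.filter fun l : Fin k => l ≠ a ∧ l ≠ b ∧ l ≠ c with hS
  have h1 : (Finset.univ.filter fun l : Fin k => l ≠ a ∧ l ≠ b) = insert c S := by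
    ext l; simp only [hS, Finset.mem_filter, Finset.mem_insert, Finset.mem_univ, true_and]
    constructor
    · rintro ⟨h₁, h₂⟩
      by_cases h : l = c
      · exact Or.inl h
      · exact Or.inr ⟨h₁, h₂, h⟩
    · rintro (h | ⟨h₁, h₂, _⟩)
      · subst h; exact ⟨fun e => hac e.symm, fun e => hbc e.symm⟩
      · exact ⟨h₁, h₂⟩
  have h2 : (Finset.univ.filter fun l : Fin k => l ≠ b ∧ l ≠ c) = insert a S := by
    ext l; simp only [hS, Finset.mem_filter, Finset.mem_insert, Finset.mem_univ, true_and]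
    constructor
    · rintro ⟨h₁, h₂⟩
      by_cases h : l = a
      · exact Or.inl h
      · exact Or.inr ⟨h, h₁, h₂⟩
    · rintro (h | ⟨_, h₁, h₂⟩)
      · subst h; exact ⟨hab, hac⟩
      · exact ⟨h₁, h₂⟩
  have h3 : (Finset.univ.filter fun l : Fin k => l ≠ a ∧ l ≠ c) = insert b S := by
    ext l; simp only [hS, Finset.mem_filter, Finset.mem_insert, Finset.mem_univ, true_and]
    constructor
    · rintro ⟨h₁, h₂⟩
      by_cases h : l = b
      · exact Or.inl h
      · exact Or.inr ⟨h₁, h, h₂⟩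
    · rintro (h | ⟨h₁, _, h₂⟩)
      · subst h; exact ⟨fun e => hab e.symm, hbc⟩
      · exact ⟨h₁, h₂⟩
  have hc : c ∉ S := by simp [hS]
  have ha : a ∉ S := by simp [hS]
  have hb : b ∉ S := by simp [hS]
  rw [gbeta, gbeta, gbeta, h1, h2, h3, Finset.prod_insert hc, Finset.prod_insert ha,
    Finset.prod_insert hb]
  ring

lemma permAct_gbeta (k : ℕ) (σ : Equiv.Perm (Fin k)) (a b : Fin k) :
    permAct k σ (gbeta k a b) = gbeta k (σ a) (σ b) := by
  rw [gbeta, gbeta, permAct, map_mul, map_sub, map_mul, map_mul, map_prod]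
  simp only [aeval_X]
  congr 1
  refine Finset.prod_equiv σ ?_ ?_
  · intro l
    simp [σ.injective.ne_iff]
  · intro l _
    rfl

/-- `Tgen i = ∑_j gbeta i j`; equals `T_i`. -/
def Tgen (k : ℕ) (i : Fin k) : R k := ∑ j : Fin k, gbeta k i j

lemma permAct_Tgen (k : ℕ) (σ : Equiv.Perm (Fin k)) (i : Fin k) :
    permAct k σ (Tgen k i) = Tgen k (σ i) := by
  rw [Tgen, Tgen, map_sum]
  refine Finset.sum_equiv σ (by simp) ?_
  intro j _
  exact permAct_gbeta k σ i j

lemma T1_eq_Tgen (k : ℕ) (hk : 3 ≤ k) : T1 k hk = Tgen k (z k hk) := by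
  rw [T1, Tgen]
  have : (Finset.univ.filter fun j : Fin k => j ≠ z k hk) =
      Finset.univ.erase (z k hk) := by
    ext j; simp
  rw [this]
  simp only [beta_eq_gbeta]
  exact Finset.sum_erase _ (gbeta_self k _)

lemma Tv_eq_Tgen (k : ℕ) (hk : 3 ≤ k) (i : Fin k) : Tv k hk i = Tgen k i := by
  rw [Tv]
  split_ifs with h
  · rw [T1_eq_Tgen, h]
  · rw [T1_eq_Tgen, beta_eq_gbeta, Tgen, Tgen]
    have key : ∀ j : Fin k, gbeta k i j = gbeta k (z k hk) j - gbeta k (z k hk) i := by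
      intro j
      have := gbeta_cocycle k (z k hk) i j
      linear_combination this
    rw [Finset.sum_congr rfl fun j _ => key j, Finset.sum_sub_distrib,
      Finset.sum_const, Finset.card_univ, Fintype.card_fin, nsmul_eq_mul]

/-- For every `σ ∈ S_k` and every `i`, `σ · T_i = T_{σ(i)}`. -/
theorem stmt_9 (k : ℕ) (hk : 3 ≤ k) (σ : Equiv.Perm (Fin k)) (i : Fin k) :
    permAct k σ (Tv k hk i) = Tv k hk (σ i) := by
  rw [Tv_eq_Tgen, Tv_eq_Tgen]
  exact permAct_Tgen k σ i
end
end

section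
/- The subalgebra ℂ[β₂, …, β_k] of R is stable under the S_k-action, its S_k-invariants are ℂ[β₂, …, β_k]^{S_k} = ℂ[e₂(T₁,…,T_k), …, e_k(T₁,…,T_k)], and its sign-isotypic part is ℂ[β₂, …, β_k]^{sgn} = Δ_T · ℂ[e₂(T₁,…,T_k), …, e_k(T₁,…,T_k)], where e_s denotes the s-th elementary symmetric polynomial and Δ_T = ∏_{1 ≤ i < j ≤ k} (T_i − T_j). -/
open MvPolynomial

noncomputable section

/-- The `s`-th elementary symmetric polynomial evaluated at `(T₁, …, T_k)`. -/
def esymmT (k : ℕ) (hk : 3 ≤ k) (s : ℕ) : R k :=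
  ∑ t ∈ Finset.univ.powersetCard s, ∏ j ∈ t, Tv k hk j

/-- `Δ_T = ∏_{1 ≤ i < j ≤ k} (T_i − T_j)`. -/
def DeltaT (k : ℕ) (hk : 3 ≤ k) : R k :=
  ∏ p ∈ Finset.univ.filter fun p : Fin k × Fin k => p.1 < p.2, (Tv k hk p.1 - Tv k hk p.2)

namespace Aux

variable (k : ℕ) (hk : 3 ≤ k)

/-- `γ_{ab}`. -/
def gamma (a b : Fin k) : R k :=
  (∏ l ∈ Finset.univ.filter fun l : Fin k => l ≠ a ∧ l ≠ b, X ((0 : Fin 2), l)) *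
    (X ((0 : Fin 2), a) * X ((1 : Fin 2), b) -
      X ((1 : Fin 2), a) * X ((0 : Fin 2), b))

lemma beta_eq_gamma (j : Fin k) : beta k hk j = gamma k (z k hk) j := rfl


lemma gamma_same (a : Fin k) : gamma k a a = 0 := by
  unfold gamma
  have : (X ((0 : Fin 2), a) * X ((1 : Fin 2), a) -
      X ((1 : Fin 2), a) * X ((0 : Fin 2), a) : R k) = 0 := by ring
  rw [this, mul_zero]

lemma gamma_antisymm (a b : Fin k) : gamma k a b = - gamma k b a := by
  unfold gamma
  have h : (Finset.univ.filter fun l : Fin k => l ≠ a ∧ l ≠ b) =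
      (Finset.univ.filter fun l : Fin k => l ≠ b ∧ l ≠ a) := by
    apply Finset.filter_congr; intro l _; simp [and_comm]
  rw [h]; ring

lemma prod_factor (a b c : Fin k) (hca : c ≠ a) (hcb : c ≠ b) :
    (∏ l ∈ Finset.univ.filter fun l : Fin k => l ≠ a ∧ l ≠ b, X ((0 : Fin 2), l) : R k) =
      X ((0 : Fin 2), c) *
        ∏ l ∈ Finset.univ.filter fun l : Fin k => l ≠ a ∧ l ≠ b ∧ l ≠ c, X ((0 : Fin 2), l) := by
  have hc : c ∈ Finset.univ.filter fun l : Fin k => l ≠ a ∧ l ≠ b := by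
    simp [hca, hcb]
  rw [← Finset.mul_prod_erase _ _ hc]
  congr 1
  apply Finset.prod_congr ?_ (fun _ _ => rfl)
  apply Finset.ext; intro l
  simp only [Finset.mem_erase, Finset.mem_filter, Finset.mem_univ, true_and]
  tauto

lemma filter3_perm (a b c a' b' c' : Fin k)
    (h : ∀ l : Fin k, (l ≠ a ∧ l ≠ b ∧ l ≠ c) ↔ (l ≠ a' ∧ l ≠ b' ∧ l ≠ c')) :
    (Finset.univ.filter fun l : Fin k => l ≠ a ∧ l ≠ b ∧ l ≠ c) =
      (Finset.univ.filter fun l : Fin k => l ≠ a' ∧ l ≠ b' ∧ l ≠ c') := by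
  apply Finset.filter_congr; intro l _; simpa using h l

lemma gamma_eq (a b : Fin k) :
    gamma k a b = gamma k (z k hk) b - gamma k (z k hk) a := by
  set c := z k hk with hc
  by_cases hab : a = b
  · subst hab; rw [gamma_same, sub_self]
  by_cases hac : a = c
  · subst hac; rw [gamma_same, sub_zero]
  by_cases hbc : b = c
  · subst hbc; rw [gamma_same, zero_sub, gamma_antisymm]
  have h1 := prod_factor k a b c (fun h => hac h.symm) (fun h => hbc h.symm)
  have h2 := prod_factor k c b a hac hab
  have h3 := prod_factor k c a b hbc (fun h => hab h.symm)
  unfold gamma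
  rw [h1, h2, h3,
    filter3_perm k c b a a b c (by intro l; tauto),
    filter3_perm k c a b a b c (by intro l; tauto)]
  ring


lemma permAct_gamma (σ : Equiv.Perm (Fin k)) (a b : Fin k) :
    permAct k σ (gamma k a b) = gamma k (σ a) (σ b) := by
  unfold gamma permAct
  rw [map_mul, map_sub, map_mul, map_mul, map_prod]
  simp only [aeval_X]
  congr 1
  apply Finset.prod_equiv σ
  · intro l
    simp only [Finset.mem_filter, Finset.mem_univ, true_and]
    constructor
    · rintro ⟨h1, h2⟩; exact ⟨fun h => h1 (σ.injective h), fun h => h2 (σ.injective h)⟩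
    · rintro ⟨h1, h2⟩; exact ⟨fun h => h1 (by rw [h]), fun h => h2 (by rw [h])⟩
  · intro l _; rfl

lemma permAct_beta (σ : Equiv.Perm (Fin k)) (j : Fin k) :
    permAct k σ (beta k hk j) = beta k hk (σ j) - beta k hk (σ (z k hk)) := by
  rw [beta_eq_gamma, permAct_gamma, gamma_eq k hk, ← beta_eq_gamma, ← beta_eq_gamma]

lemma beta_z (j : Fin k) (hj : j = z k hk) : beta k hk j = 0 := by
  rw [hj, beta_eq_gamma, gamma_same]



lemma sum_univ_beta : ∑ m : Fin k, beta k hk m = T1 k hk := by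
  unfold T1
  rw [Finset.filter_ne']
  rw [← Finset.sum_erase_add _ _ (Finset.mem_univ (z k hk)), beta_z k hk _ rfl, add_zero]

lemma sum_beta_ne (c : Fin k) :
    ∑ m ∈ Finset.univ.filter fun m : Fin k => m ≠ c, beta k hk m = T1 k hk - beta k hk c := by
  rw [Finset.filter_ne', eq_sub_iff_add_eq, Finset.sum_erase_add _ _ (Finset.mem_univ c),
    sum_univ_beta k hk]

lemma permAct_T1 (σ : Equiv.Perm (Fin k)) :
    permAct k σ (T1 k hk) = T1 k hk - (k : R k) * beta k hk (σ (z k hk)) := by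
  unfold T1
  rw [map_sum]
  have h1 : ∀ j ∈ Finset.univ.filter fun j : Fin k => j ≠ z k hk,
      permAct k σ (beta k hk j) = beta k hk (σ j) - beta k hk (σ (z k hk)) :=
    fun j _ => permAct_beta k hk σ j
  rw [Finset.sum_congr rfl h1, Finset.sum_sub_distrib, Finset.sum_const]
  have h2 : ∑ j ∈ Finset.univ.filter fun j : Fin k => j ≠ z k hk, beta k hk (σ j) =
      ∑ m ∈ Finset.univ.filter fun m : Fin k => m ≠ σ (z k hk), beta k hk m := by
    apply Finset.sum_equiv σ
    · intro l
      simp only [Finset.mem_filter, Finset.mem_univ, true_and]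
      exact ⟨fun h1 h2 => h1 (σ.injective h2), fun h1 h2 => h1 (by rw [h2])⟩
    · intro l _; rfl
  rw [h2, sum_beta_ne k hk]
  have hcard : (Finset.univ.filter fun j : Fin k => j ≠ z k hk).card = k - 1 := by
    rw [Finset.filter_ne', Finset.card_erase_of_mem (Finset.mem_univ _), Finset.card_univ,
      Fintype.card_fin]
  rw [hcard, nsmul_eq_mul]
  have : ((k - 1 : ℕ) : R k) = (k : R k) - 1 := by
    have : (1:ℕ) ≤ k := by omega
    push_cast [this]; ring
  rw [this]; unfold T1; ring

lemma Tv_eq (i : Fin k) : Tv k hk i = T1 k hk - (k : R k) * beta k hk i := by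
  unfold Tv
  split_ifs with h
  · rw [beta_z k hk i h]; ring
  · rfl

lemma permAct_Tv (σ : Equiv.Perm (Fin k)) (i : Fin k) :
    permAct k σ (Tv k hk i) = Tv k hk (σ i) := by
  rw [Tv_eq, Tv_eq, map_sub, map_mul, map_natCast, permAct_T1 k hk, permAct_beta k hk]
  ring

lemma sum_Tv : ∑ i : Fin k, Tv k hk i = 0 := by
  have h : ∀ i : Fin k, Tv k hk i = T1 k hk - (k : R k) * beta k hk i := Tv_eq k hk
  simp only [h]
  rw [Finset.sum_sub_distrib, Finset.sum_const, ← Finset.mul_sum, sum_univ_beta k hk,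
    Finset.card_univ, Fintype.card_fin, nsmul_eq_mul, sub_self]

/-- The algebra map `ℂ[u_1,…,u_k] → R`, `u_i ↦ T_i`. -/
def Phi : MvPolynomial (Fin k) ℂ →ₐ[ℂ] R k := aeval (Tv k hk)

lemma permAct_Phi (σ : Equiv.Perm (Fin k)) (g : MvPolynomial (Fin k) ℂ) :
    permAct k σ (Phi k hk g) = Phi k hk (rename σ g) := by
  unfold Phi
  rw [aeval_rename, comp_aeval_apply]
  have : (fun i => permAct k σ (Tv k hk i)) = Tv k hk ∘ ⇑σ := by
    funext i; exact permAct_Tv k hk σ i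
  rw [this]


/-- The subalgebra `A = ℂ[β₂,…,β_k]`. -/
def A : Subalgebra ℂ (R k) :=
  Algebra.adjoin ℂ {x : R k | ∃ j, j ≠ z k hk ∧ x = beta k hk j}

/-- The subalgebra `ℂ[e₂(T),…,e_k(T)]`. -/
def AdjE : Subalgebra ℂ (R k) :=
  Algebra.adjoin ℂ {x : R k | ∃ s : ℕ, 2 ≤ s ∧ s ≤ k ∧ x = esymmT k hk s}

lemma beta_mem (j : Fin k) : beta k hk j ∈ A k hk := by
  by_cases h : j = z k hk
  · rw [beta_z k hk j h]; exact Subalgebra.zero_mem _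
  · exact Algebra.subset_adjoin ⟨j, h, rfl⟩

lemma T1_mem : T1 k hk ∈ A k hk :=
  Subalgebra.sum_mem _ fun j _ => beta_mem k hk j

lemma Tv_mem (i : Fin k) : Tv k hk i ∈ A k hk := by
  rw [Tv_eq]
  exact Subalgebra.sub_mem _ (T1_mem k hk)
    (Subalgebra.mul_mem _ (Subalgebra.natCast_mem _ k) (beta_mem k hk i))

lemma esymmT_mem (s : ℕ) : esymmT k hk s ∈ A k hk :=
  Subalgebra.sum_mem _ fun t _ => Subalgebra.prod_mem _ fun j _ => Tv_mem k hk j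

lemma DeltaT_mem : DeltaT k hk ∈ A k hk :=
  Subalgebra.prod_mem _ fun p _ =>
    Subalgebra.sub_mem _ (Tv_mem k hk p.1) (Tv_mem k hk p.2)

lemma permAct_A (σ : Equiv.Perm (Fin k)) {f : R k} (hf : f ∈ A k hk) :
    permAct k σ f ∈ A k hk := by
  have : A k hk ≤ Subalgebra.comap (permAct k σ) (A k hk) := by
    apply Algebra.adjoin_le
    rintro x ⟨j, hj, rfl⟩
    rw [SetLike.mem_coe, Subalgebra.mem_comap, permAct_beta k hk]
    exact Subalgebra.sub_mem _ (beta_mem k hk _) (beta_mem k hk _)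
  exact this hf

lemma knz (hk : 3 ≤ k) : (k : ℂ) ≠ 0 := by
  have : (0:ℕ) < k := by omega
  exact_mod_cast this.ne'

lemma beta_eq_Phi (j : Fin k) (hj : j ≠ z k hk) :
    beta k hk j = Phi k hk (MvPolynomial.C ((k : ℂ)⁻¹) * (X (z k hk) - X j)) := by
  unfold Phi
  rw [map_mul, map_sub, aeval_X, aeval_X, aeval_C]
  rw [Tv_eq, Tv_eq, beta_z k hk _ rfl]
  have : (algebraMap ℂ (R k)) (k : ℂ)⁻¹ = C ((k:ℂ)⁻¹) := rfl
  rw [this]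
  have hk0 : C ((k:ℂ)⁻¹) * (k : R k) = 1 := by
    rw [← map_natCast (C : ℂ →+* R k) k, ← map_mul, inv_mul_cancel₀ (knz k hk), map_one]
  calc beta k hk j = (C ((k:ℂ)⁻¹) * (k : R k)) * beta k hk j := by rw [hk0, one_mul]
    _ = C ((k:ℂ)⁻¹) * (T1 k hk - (k:R k) * 0 - (T1 k hk - (k:R k) * beta k hk j)) := by ring

lemma A_le_Phi_range : A k hk ≤ (Phi k hk).range := by
  apply Algebra.adjoin_le
  rintro x ⟨j, hj, rfl⟩
  exact ⟨_, (beta_eq_Phi k hk j hj).symm⟩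

lemma esymmT_eq_Phi (s : ℕ) : esymmT k hk s = Phi k hk (esymm (Fin k) ℂ s) := by
  unfold Phi esymmT esymm
  rw [map_sum]
  apply Finset.sum_congr rfl
  intro t _
  rw [map_prod]
  apply Finset.prod_congr rfl
  intro j _
  rw [aeval_X]

lemma esymmT_one : esymmT k hk 1 = 0 := by
  rw [esymmT_eq_Phi, esymm_one, map_sum]
  have : ∀ i : Fin k, Phi k hk (X i) = Tv k hk i := fun i => aeval_X _ _
  rw [Finset.sum_congr rfl fun i _ => this i]
  exact sum_Tv k hk

lemma permAct_esymmT (σ : Equiv.Perm (Fin k)) (s : ℕ) :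
    permAct k σ (esymmT k hk s) = esymmT k hk s := by
  rw [esymmT_eq_Phi, permAct_Phi, esymm_isSymmetric (Fin k) ℂ s σ]

lemma AdjE_le_A : AdjE k hk ≤ A k hk := by
  apply Algebra.adjoin_le
  rintro x ⟨s, _, _, rfl⟩
  exact esymmT_mem k hk s

lemma AdjE_invariant (σ : Equiv.Perm (Fin k)) {f : R k} (hf : f ∈ AdjE k hk) :
    permAct k σ f = f := by
  have : AdjE k hk ≤ AlgHom.equalizer (permAct k σ) (AlgHom.id ℂ (R k)) := by
    apply Algebra.adjoin_le
    rintro x ⟨s, _, _, rfl⟩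
    exact permAct_esymmT k hk σ s
  exact this hf

lemma symm_mem_AdjE {g : MvPolynomial (Fin k) ℂ} (hg : g.IsSymmetric) :
    Phi k hk g ∈ AdjE k hk := by
  obtain ⟨q, hq⟩ := esymmAlgHom_surjective (σ := Fin k) (R := ℂ)
    (n := k) (by simp) ⟨g, hg⟩
  have hg' : aeval (fun i : Fin k => esymm (Fin k) ℂ (i + 1)) q = g := by
    have := congrArg Subtype.val hq
    rwa [esymmAlgHom_apply] at this
  rw [← hg', comp_aeval_apply]
  set w := fun i : Fin k => Phi k hk (esymm (Fin k) ℂ ((i : ℕ) + 1)) with hw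
  have hwmem : ∀ i : Fin k, w i ∈ AdjE k hk := by
    intro i
    show Phi k hk (esymm (Fin k) ℂ ((i : ℕ) + 1)) ∈ AdjE k hk
    rw [← esymmT_eq_Phi]
    rcases eq_or_ne (i : ℕ) 0 with h | h
    · rw [h, esymmT_one]; exact Subalgebra.zero_mem _
    · exact Algebra.subset_adjoin ⟨(i:ℕ) + 1, by omega, by have := i.2; omega, rfl⟩
  have : aeval w q ∈ Algebra.adjoin ℂ (Set.range w) := by
    rw [Algebra.adjoin_range_eq_range_aeval]
    exact ⟨q, rfl⟩
  exact Algebra.adjoin_le (by rintro x ⟨i, rfl⟩; exact hwmem i) this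


/-! ### Vandermonde sign -/

lemma prod_pairs {M : Type*} [CommMonoid M] (n : ℕ) (f : Fin n → Fin n → M) :
    ∏ p ∈ Finset.univ.filter (fun p : Fin n × Fin n => p.1 < p.2), f p.1 p.2 =
      ∏ i, ∏ j ∈ Finset.Ioi i, f i j := by
  rw [← Finset.prod_sigma Finset.univ (fun i => Finset.Ioi i) (fun x => f x.1 x.2)]
  refine Finset.prod_nbij' (fun p : Fin n × Fin n => (⟨p.1, p.2⟩ : Σ _ : Fin n, Fin n))
    (fun x : Σ _ : Fin n, Fin n => (x.1, x.2)) ?_ ?_ ?_ ?_ ?_ <;>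
    simp [Finset.mem_sigma, Finset.mem_Ioi]

lemma vand_perm {S : Type*} [CommRing S] (n : ℕ) (σ : Equiv.Perm (Fin n)) (v : Fin n → S) :
    ∏ p ∈ Finset.univ.filter (fun p : Fin n × Fin n => p.1 < p.2), (v (σ p.1) - v (σ p.2)) =
      ((Equiv.Perm.sign σ : ℤ) : S) *
        ∏ p ∈ Finset.univ.filter (fun p : Fin n × Fin n => p.1 < p.2), (v p.1 - v p.2) := by
  set N := (Finset.univ.filter (fun p : Fin n × Fin n => p.1 < p.2)).card with hN
  have key : ∀ w : Fin n → S,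
      ∏ p ∈ Finset.univ.filter (fun p : Fin n × Fin n => p.1 < p.2), (w p.1 - w p.2) =
        (-1 : S) ^ N * (Matrix.vandermonde w).det := by
    intro w
    rw [Matrix.det_vandermonde, ← prod_pairs n (fun i j => w j - w i)]
    rw [← Finset.prod_const, ← Finset.prod_mul_distrib]
    apply Finset.prod_congr rfl
    intro p _
    ring
  have hsub : Matrix.vandermonde (fun i => v (σ i)) = (Matrix.vandermonde v).submatrix σ id := by
    ext i j
    simp [Matrix.vandermonde_apply]
  rw [key (fun i => v (σ i)), key v, hsub, Matrix.det_permute]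
  ring


/-! ### The Vandermonde polynomial in `ℂ[u_1,…,u_k]` -/

/-- Abbreviation for the auxiliary polynomial ring. -/
abbrev U (k : ℕ) : Type := MvPolynomial (Fin k) ℂ

/-- The pairs set. -/
def pairs (k : ℕ) : Finset (Fin k × Fin k) :=
  Finset.univ.filter fun p : Fin k × Fin k => p.1 < p.2

/-- The Vandermonde polynomial. -/
def Du (k : ℕ) : U k := ∏ p ∈ pairs k, (X p.1 - X p.2)

lemma Phi_Du : Phi k hk (Du k) = DeltaT k hk := by
  unfold Phi Du DeltaT pairs
  rw [map_prod]
  apply Finset.prod_congr rfl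
  intro p _
  rw [map_sub, aeval_X, aeval_X]

lemma rename_Du (σ : Equiv.Perm (Fin k)) :
    rename σ (Du k) = ((Equiv.Perm.sign σ : ℤ) : ℂ) • Du k := by
  unfold Du pairs
  rw [map_prod]
  have h : ∀ p ∈ Finset.univ.filter fun p : Fin k × Fin k => p.1 < p.2,
      rename σ (X p.1 - X p.2) = (X (σ p.1) - X (σ p.2) : U k) := by
    intro p _; rw [map_sub, rename_X, rename_X]
  rw [Finset.prod_congr rfl h, vand_perm k σ (fun i => (X i : U k))]
  have hc : (((Equiv.Perm.sign σ : ℤ)) : U k) = C (((Equiv.Perm.sign σ : ℤ) : ℂ)) :=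
    (map_intCast (C : ℂ →+* U k) _).symm
  rw [hc, ← MvPolynomial.smul_eq_C_mul]

lemma permAct_DeltaT (σ : Equiv.Perm (Fin k)) :
    permAct k σ (DeltaT k hk) = ((Equiv.Perm.sign σ : ℤ) : ℂ) • DeltaT k hk := by
  rw [← Phi_Du k hk, permAct_Phi, rename_Du, map_smul, Phi_Du]

/-! ### Divisibility by `X i - X j` -/

/-- Substitution `X j ↦ X i`. -/
def phiSub (k : ℕ) (i j : Fin k) : U k →ₐ[ℂ] U k :=
  aeval fun l : Fin k => if l = j then X i else X l

lemma phiSub_X (i j l : Fin k) : phiSub k i j (X l) = if l = j then X i else X l :=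
  aeval_X _ _

lemma dvd_sub_phiSub (i j : Fin k) (q : U k) :
    (X i - X j : U k) ∣ q - phiSub k i j q := by
  induction q using MvPolynomial.induction_on with
  | C a =>
      have h : phiSub k i j (MvPolynomial.C a) = MvPolynomial.C a := by
        simp [phiSub, algebraMap_eq]
      rw [h, sub_self]; exact dvd_zero _
  | add p q hp hq =>
      rw [map_add]
      have h : p + q - (phiSub k i j p + phiSub k i j q)
          = (p - phiSub k i j p) + (q - phiSub k i j q) := by ring
      rw [h]; exact dvd_add hp hq
  | mul_X p l hp =>
      rw [map_mul, phiSub_X]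
      by_cases hl : l = j
      · rw [if_pos hl, hl]
        have h : p * X j - phiSub k i j p * X i =
            (p - phiSub k i j p) * X j + phiSub k i j p * (X j - X i) := by ring
        rw [h]
        refine dvd_add (hp.mul_right _) (Dvd.dvd.mul_left ?_ _)
        exact (dvd_neg.mpr dvd_rfl).trans (dvd_of_eq (neg_sub _ _))
      · rw [if_neg hl]
        have h : p * X l - phiSub k i j p * X l = (p - phiSub k i j p) * X l := by ring
        rw [h]; exact hp.mul_right _

lemma phiSub_dvd_iff (i j : Fin k) (hij : i ≠ j) (q : U k) :
    (X i - X j : U k) ∣ q ↔ phiSub k i j q = 0 := by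
  constructor
  · rintro ⟨r, rfl⟩
    rw [map_mul, map_sub, phiSub_X, phiSub_X, if_pos rfl, if_neg hij, sub_self, zero_mul]
  · intro h
    have := dvd_sub_phiSub k i j q
    rwa [h, sub_zero] at this

lemma X_sub_X_ne_zero (i j : Fin k) (hij : i ≠ j) : (X i - X j : U k) ≠ 0 :=
  sub_ne_zero.mpr fun h => hij (MvPolynomial.X_injective h)

lemma X_sub_X_prime (i j : Fin k) (hij : i ≠ j) : Prime (X i - X j : U k) := by
  refine ⟨X_sub_X_ne_zero k i j hij, ?_, ?_⟩
  · intro h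
    have h2 : IsUnit (phiSub k i j (X i - X j)) := h.map _
    rw [map_sub, phiSub_X, phiSub_X, if_pos rfl, if_neg hij, sub_self] at h2
    exact not_isUnit_zero h2
  · intro a b hab
    rw [phiSub_dvd_iff k i j hij] at hab
    rw [map_mul] at hab
    rcases mul_eq_zero.mp hab with h | h
    · exact Or.inl ((phiSub_dvd_iff k i j hij a).mpr h)
    · exact Or.inr ((phiSub_dvd_iff k i j hij b).mpr h)

lemma prod_primes_dvd' {α : Type*} [CommMonoidWithZero α] [IsCancelMulZero α] {ι : Type*}
    (s : Finset ι) (f : ι → α) (g : α)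
    (hp : ∀ i ∈ s, Prime (f i))
    (hnd : ∀ i ∈ s, ∀ j ∈ s, i ≠ j → ¬ f i ∣ f j)
    (hd : ∀ i ∈ s, f i ∣ g) : (∏ i ∈ s, f i) ∣ g := by
  classical
  revert hd; revert hnd; revert hp; revert g
  induction s using Finset.induction_on with
  | empty => intro g _ _ _; simpa using one_dvd g
  | @insert a s ha ih =>
      intro g hp hnd hd
      obtain ⟨h', rfl⟩ := hd a (Finset.mem_insert_self a s)
      have hstep : ∀ i ∈ s, f i ∣ h' := by
        intro i hi
        have hia : i ≠ a := fun h => ha (h ▸ hi)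
        have h1 : f i ∣ f a * h' := hd i (Finset.mem_insert_of_mem hi)
        rcases (hp i (Finset.mem_insert_of_mem hi)).2.2 _ _ h1 with h2 | h2
        · exact absurd h2
            (hnd i (Finset.mem_insert_of_mem hi) a (Finset.mem_insert_self a s) hia)
        · exact h2
      rw [Finset.prod_insert ha]
      exact mul_dvd_mul_left (f a)
        (ih h' (fun i hi => hp i (Finset.mem_insert_of_mem hi))
          (fun i hi j hj hij =>
            hnd i (Finset.mem_insert_of_mem hi) j (Finset.mem_insert_of_mem hj) hij)
          hstep)


/-! ### Antisymmetric polynomials -/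

/-- Sign as a complex scalar. -/
def sgnC {k : ℕ} (σ : Equiv.Perm (Fin k)) : ℂ := ((Equiv.Perm.sign σ : ℤ) : ℂ)

lemma sgnC_mul_self (σ : Equiv.Perm (Fin k)) : sgnC σ * sgnC σ = 1 := by
  unfold sgnC
  rw [← Int.cast_mul, ← Units.val_mul, Int.units_mul_self]
  norm_num

lemma sgnC_inv_mul (τ ρ : Equiv.Perm (Fin k)) : sgnC (τ⁻¹ * ρ) = sgnC τ * sgnC ρ := by
  unfold sgnC
  rw [← Int.cast_mul, ← Units.val_mul, map_mul, Equiv.Perm.sign_inv]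

/-- Antisymmetry. -/
def IsAnti (k : ℕ) (g : U k) : Prop := ∀ σ : Equiv.Perm (Fin k), rename σ g = sgnC σ • g

lemma phiSub_rename_swap (i j : Fin k) (hij : i ≠ j) (q : U k) :
    phiSub k i j (rename (Equiv.swap i j) q) = phiSub k i j q := by
  unfold phiSub
  rw [aeval_rename]
  have hfun : ((fun l : Fin k => if l = j then (X i : U k) else X l) ∘ ⇑(Equiv.swap i j)) =
      (fun l : Fin k => if l = j then (X i : U k) else X l) := by
    funext l
    simp only [Function.comp_apply, Equiv.swap_apply_def]
    by_cases h1 : l = i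
    · simp [h1, hij, hij.symm]
    · by_cases h2 : l = j
      · simp [h2, hij, hij.symm, Ne.symm hij]
      · simp [h1, h2]
  rw [hfun]

lemma anti_phiSub_zero {g : U k} (hg : IsAnti k g) (i j : Fin k) (hij : i ≠ j) :
    phiSub k i j g = 0 := by
  have h1 : rename (Equiv.swap i j) g = -g := by
    rw [hg (Equiv.swap i j)]
    unfold sgnC
    rw [Equiv.Perm.sign_swap hij]
    norm_num
  have h2 := congrArg (phiSub k i j) h1
  rw [phiSub_rename_swap k i j hij, map_neg] at h2
  have h3 : (2 : ℂ) • phiSub k i j g = 0 := by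
    rw [two_smul]
    nth_rewrite 2 [h2]
    exact add_neg_cancel _
  rcases smul_eq_zero.mp h3 with h | h
  · norm_num at h
  · exact h

lemma Du_ne_zero : Du k ≠ 0 := by
  unfold Du
  rw [Finset.prod_ne_zero_iff]
  intro p hp
  have : p.1 ≠ p.2 := ne_of_lt (by simpa [pairs] using hp)
  exact X_sub_X_ne_zero k _ _ this

lemma anti_factor {g : U k} (hg : IsAnti k g) :
    ∃ h : U k, g = Du k * h ∧ h.IsSymmetric := by
  have hdvd : Du k ∣ g := by
    apply prod_primes_dvd'
    · intro p hp
      exact X_sub_X_prime k _ _ (ne_of_lt (by simpa [pairs] using hp))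
    · intro p hp q hq hpq
      have hp' : p.1 < p.2 := by simpa [pairs] using hp
      have hq' : q.1 < q.2 := by simpa [pairs] using hq
      rw [phiSub_dvd_iff k _ _ (ne_of_lt hp')]
      rw [map_sub, phiSub_X, phiSub_X]
      by_cases h1 : q.1 = p.2
      · rw [if_pos h1]
        have h2 : q.2 ≠ p.2 := by rw [← h1]; exact ne_of_gt hq'
        rw [if_neg h2]
        have h4 : p.1 < q.2 := by rw [← h1] at hp'; exact hp'.trans hq'
        exact X_sub_X_ne_zero k _ _ (ne_of_lt h4)
      · rw [if_neg h1]
        by_cases h2 : q.2 = p.2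
        · rw [if_pos h2]
          have h3 : q.1 ≠ p.1 := fun h => hpq (Prod.ext h h2).symm
          exact X_sub_X_ne_zero k _ _ h3
        · rw [if_neg h2]
          exact X_sub_X_ne_zero k _ _ (ne_of_lt hq')
    · intro p hp
      rw [phiSub_dvd_iff k _ _ (ne_of_lt (by simpa [pairs] using hp))]
      exact anti_phiSub_zero k hg _ _ (ne_of_lt (by simpa [pairs] using hp))
  obtain ⟨h, hh⟩ := hdvd
  refine ⟨h, hh, ?_⟩
  intro e
  have h1 : rename e g = sgnC e • g := hg e
  rw [hh, map_mul, rename_Du, smul_mul_assoc] at h1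
  unfold sgnC at h1
  have hsne : ((Equiv.Perm.sign e : ℤ) : ℂ) ≠ 0 := by
    intro hc
    have h5 := sgnC_mul_self k e
    unfold sgnC at h5
    rw [hc, zero_mul] at h5
    exact zero_ne_one h5
  have h3 := smul_right_injective (U k) hsne h1
  exact mul_left_cancel₀ (Du_ne_zero k) h3


/-! ### Averaging -/

lemma factC_ne : ((Nat.factorial k : ℂ)) ≠ 0 := by
  exact_mod_cast (Nat.factorial_ne_zero k)

/-- Symmetrization. -/
def symAvg (g : U k) : U k :=
  (Nat.factorial k : ℂ)⁻¹ • ∑ σ : Equiv.Perm (Fin k), rename σ g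

/-- Antisymmetrization. -/
def altAvg (g : U k) : U k :=
  (Nat.factorial k : ℂ)⁻¹ • ∑ σ : Equiv.Perm (Fin k), sgnC σ • rename σ g

lemma symAvg_isSymmetric (g : U k) : (symAvg k g).IsSymmetric := by
  intro τ
  unfold symAvg
  rw [map_smul, map_sum]
  congr 1
  have h1 : ∀ σ : Equiv.Perm (Fin k), rename τ (rename σ g) = rename (⇑(τ * σ)) g := by
    intro σ; rw [rename_rename]; rfl
  rw [Finset.sum_congr rfl fun σ _ => h1 σ]
  exact Fintype.sum_equiv (Equiv.mulLeft τ) _ _ (fun σ => rfl)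

lemma altAvg_isAnti (g : U k) : IsAnti k (altAvg k g) := by
  intro τ
  unfold altAvg
  rw [map_smul, map_sum]
  have h1 : ∀ σ : Equiv.Perm (Fin k),
      rename τ (sgnC σ • rename σ g) = sgnC σ • rename (⇑(τ * σ)) g := by
    intro σ; rw [map_smul, rename_rename]; rfl
  rw [Finset.sum_congr rfl fun σ _ => h1 σ]
  have h2 : ∑ σ : Equiv.Perm (Fin k), sgnC σ • rename (⇑(τ * σ)) g =
      ∑ ρ : Equiv.Perm (Fin k), sgnC (τ⁻¹ * ρ) • rename (⇑ρ) g := by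
    apply Fintype.sum_equiv (Equiv.mulLeft τ)
    intro σ
    simp only [Equiv.coe_mulLeft]
    rw [inv_mul_cancel_left]
  rw [h2]
  have h3 : ∀ ρ : Equiv.Perm (Fin k),
      sgnC (τ⁻¹ * ρ) • rename (⇑ρ) g = sgnC τ • (sgnC ρ • rename (⇑ρ) g) := by
    intro ρ; rw [sgnC_inv_mul k, mul_smul]
  rw [Finset.sum_congr rfl fun ρ _ => h3 ρ, ← Finset.smul_sum, smul_comm]

lemma Phi_symAvg {g : U k} {f : R k} (hfPhi : Phi k hk g = f)
    (hinv : ∀ σ : Equiv.Perm (Fin k), permAct k σ f = f) :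
    Phi k hk (symAvg k g) = f := by
  unfold symAvg
  rw [map_smul, map_sum]
  have h1 : ∀ σ : Equiv.Perm (Fin k), Phi k hk (rename σ g) = f := by
    intro σ; rw [← permAct_Phi, hfPhi, hinv σ]
  rw [Finset.sum_congr rfl fun σ _ => h1 σ, Finset.sum_const, Finset.card_univ,
    Fintype.card_perm, Fintype.card_fin, ← Nat.cast_smul_eq_nsmul ℂ, smul_smul,
    inv_mul_cancel₀ (factC_ne k), one_smul]

lemma Phi_altAvg {g : U k} {f : R k} (hfPhi : Phi k hk g = f)
    (hanti : ∀ σ : Equiv.Perm (Fin k), permAct k σ f = sgnC σ • f) :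
    Phi k hk (altAvg k g) = f := by
  unfold altAvg
  rw [map_smul, map_sum]
  have h1 : ∀ σ : Equiv.Perm (Fin k), Phi k hk (sgnC σ • rename σ g) = f := by
    intro σ
    rw [map_smul, ← permAct_Phi, hfPhi, hanti σ, smul_smul, sgnC_mul_self k, one_smul]
  rw [Finset.sum_congr rfl fun σ _ => h1 σ, Finset.sum_const, Finset.card_univ,
    Fintype.card_perm, Fintype.card_fin, ← Nat.cast_smul_eq_nsmul ℂ, smul_smul,
    inv_mul_cancel₀ (factC_ne k), one_smul]


end Aux

/-- `ℂ[β₂, …, β_k]` is `S_k`-stable, its `S_k`-invariants are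
`ℂ[e₂(T₁,…,T_k), …, e_k(T₁,…,T_k)]`, and its sign-isotypic part is
`Δ_T · ℂ[e₂(T₁,…,T_k), …, e_k(T₁,…,T_k)]`. -/
theorem stmt_10 (k : ℕ) (hk : 3 ≤ k) :
    (∀ σ : Equiv.Perm (Fin k), ∀ f ∈ Algebra.adjoin ℂ {x : R k | ∃ j, j ≠ z k hk ∧ x = beta k hk j},
      permAct k σ f ∈ Algebra.adjoin ℂ {x : R k | ∃ j, j ≠ z k hk ∧ x = beta k hk j}) ∧
    ({f : R k | f ∈ Algebra.adjoin ℂ {x : R k | ∃ j, j ≠ z k hk ∧ x = beta k hk j} ∧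
        ∀ σ : Equiv.Perm (Fin k), permAct k σ f = f} =
      (Algebra.adjoin ℂ {x : R k | ∃ s : ℕ, 2 ≤ s ∧ s ≤ k ∧ x = esymmT k hk s} : Set (R k))) ∧
    ({f : R k | f ∈ Algebra.adjoin ℂ {x : R k | ∃ j, j ≠ z k hk ∧ x = beta k hk j} ∧
        ∀ σ : Equiv.Perm (Fin k), permAct k σ f = ((Equiv.Perm.sign σ : ℤ) : ℂ) • f} =
      (fun h => DeltaT k hk * h) ''
        (Algebra.adjoin ℂ {x : R k | ∃ s : ℕ, 2 ≤ s ∧ s ≤ k ∧ x = esymmT k hk s} : Set (R k))) := by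
  refine ⟨fun σ f hf => Aux.permAct_A k hk σ hf, ?_, ?_⟩
  · apply Set.ext
    intro f
    constructor
    · rintro ⟨hfA, hinv⟩
      obtain ⟨g, hg⟩ := Aux.A_le_Phi_range k hk hfA
      have hsym := Aux.symAvg_isSymmetric k g
      have hPhi : Aux.Phi k hk (Aux.symAvg k g) = f := Aux.Phi_symAvg k hk hg hinv
      have := Aux.symm_mem_AdjE k hk hsym
      rw [hPhi] at this
      exact this
    · intro hf
      exact ⟨Aux.AdjE_le_A k hk hf, fun σ => Aux.AdjE_invariant k hk σ hf⟩
  · apply Set.ext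
    intro f
    constructor
    · rintro ⟨hfA, hanti⟩
      obtain ⟨g, hg⟩ := Aux.A_le_Phi_range k hk hfA
      have halt := Aux.altAvg_isAnti k g
      have hPhi : Aux.Phi k hk (Aux.altAvg k g) = f := Aux.Phi_altAvg k hk hg hanti
      obtain ⟨h, hfac, hhsym⟩ := Aux.anti_factor k halt
      refine ⟨Aux.Phi k hk h, Aux.symm_mem_AdjE k hk hhsym, ?_⟩
      show DeltaT k hk * Aux.Phi k hk h = f
      rw [← Aux.Phi_Du k hk, ← map_mul, ← hfac, hPhi]
    · rintro ⟨u, hu, rfl⟩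
      constructor
      · exact Subalgebra.mul_mem _ (Aux.DeltaT_mem k hk) (Aux.AdjE_le_A k hk hu)
      · intro σ
        show permAct k σ (DeltaT k hk * u) = _
        rw [map_mul, Aux.permAct_DeltaT k hk σ, Aux.AdjE_invariant k hk σ hu, smul_mul_assoc]
end
end
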